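/- For every integer n ≥ 2, the sum S₁(n) = Σ_{p ≤ n, p prime} (n−1)/(p−1) satisfies S₁(n) > ϑ(n)/log n + (n−1)·log log n + c₈·(n−1), where ϑ(n) = Σ_{p ≤ n, p prime} log p is the Chebyshev theta function and c₈ = −11.869 (the paper's effective constant c₈ ≈ −11.86870152). -/

import Mathlib

open Finset

/-- The Chebyshev theta function `ϑ(n) = ∑_{p ≤ n, p prime} log p`. -/
noncomputable def theta (n : ℕ) : ℝ :=
  ∑ p ∈ (Finset.range (n + 1)).filter Nat.Prime, Real.log p

/-- `S₁(n) = ∑_{p ≤ n, p prime} (n−1)/(p−1)`. -/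
noncomputable def S1 (n : ℕ) : ℝ :=
  ∑ p ∈ (Finset.range (n + 1)).filter Nat.Prime, ((n : ℝ) - 1) / ((p : ℝ) - 1)

/-- The completely multiplicative function `n ↦ (n : ℝ)⁻¹`. -/
noncomputable def invHom : ℕ →* ℝ where
  toFun n := (n : ℝ)⁻¹
  map_one' := by simp
  map_mul' m n := by push_cast; rw [mul_inv]

lemma harmonic_le_prod (n : ℕ) :
    (harmonic n : ℝ) ≤ ∏ p ∈ (n + 1).primesBelow, (1 - (p : ℝ)⁻¹)⁻¹ := by
  have hlt : ∀ {p : ℕ}, p.Prime → ‖invHom p‖ < 1 := by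
    intro p hp
    have h1 : (1 : ℝ) < p := by exact_mod_cast hp.one_lt
    rw [invHom, MonoidHom.coe_mk, OneHom.coe_mk, Real.norm_eq_abs,
      abs_of_nonneg (by positivity)]
    rw [inv_lt_one_iff₀]; right; exact h1
  obtain ⟨hsum, hhas⟩ :=
    EulerProduct.summable_and_hasSum_smoothNumbers_prod_primesBelow_geometric hlt (n + 1)
  have hhas' : HasSum (Set.indicator ((n+1).smoothNumbers) (fun m : ℕ => (m : ℝ)⁻¹))
      (∏ p ∈ (n + 1).primesBelow, (1 - (p : ℝ)⁻¹)⁻¹) := by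
    have := (hasSum_subtype_iff_indicator
      (f := fun m : ℕ => (m : ℝ)⁻¹) (s := (n+1).smoothNumbers)).mp hhas
    exact this
  have hharm : (harmonic n : ℝ) =
      ∑ m ∈ Finset.Icc 1 n, Set.indicator ((n+1).smoothNumbers)
        (fun m : ℕ => (m : ℝ)⁻¹) m := by
    rw [harmonic_eq_sum_Icc, Rat.cast_sum]
    refine Finset.sum_congr rfl fun m hm => ?_
    have hm' := Finset.mem_Icc.mp hm
    have hmem : m ∈ (n+1).smoothNumbers := by
      refine Nat.mem_smoothNumbers.mpr ⟨by omega, fun p hp => ?_⟩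
      have h1 := Nat.le_of_mem_primeFactorsList hp
      omega
    rw [Set.indicator_of_mem hmem]
    push_cast
    ring
  rw [hharm]
  refine sum_le_hasSum _ (fun m _ => ?_) hhas'
  by_cases h : m ∈ (n+1).smoothNumbers
  · rw [Set.indicator_of_mem h]; positivity
  · rw [Set.indicator_of_notMem h]

lemma loglog_le_sum (n : ℕ) (hn : 2 ≤ n) :
    Real.log (Real.log n) ≤
      ∑ p ∈ (Finset.range (n + 1)).filter Nat.Prime, (1 : ℝ) / ((p : ℝ) - 1) := by
  have hP : (n + 1).primesBelow = (Finset.range (n + 1)).filter Nat.Prime := rfl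
  have hn1 : (1 : ℝ) ≤ n := by exact_mod_cast (by omega : 1 ≤ n)
  have hlogn : 0 < Real.log n := Real.log_pos (by exact_mod_cast (by omega : 2 ≤ n))
  have h1 : Real.log n ≤ (harmonic n : ℝ) := by
    calc Real.log n ≤ Real.log ((n:ℕ) + 1 : ℕ) := by
          apply Real.log_le_log (by positivity); push_cast; linarith
    _ ≤ harmonic n := log_add_one_le_harmonic n
  have h2 := harmonic_le_prod n
  -- each factor is ≥ 1 and the log of the product is bounded by the sum
  have hfact : ∀ p ∈ (n + 1).primesBelow, (1 : ℝ) < (1 - (p : ℝ)⁻¹)⁻¹ := by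
    intro p hp
    have hp' := Nat.prime_of_mem_primesBelow hp
    have h1p : (1 : ℝ) < p := by exact_mod_cast hp'.one_lt
    have : (0:ℝ) < (p:ℝ)⁻¹ := by positivity
    have hlt : (p:ℝ)⁻¹ < 1 := by rw [inv_lt_one_iff₀]; right; exact h1p
    rw [lt_inv_comm₀ one_pos (by linarith)]
    linarith
  have hprodpos : (0:ℝ) < ∏ p ∈ (n + 1).primesBelow, (1 - (p : ℝ)⁻¹)⁻¹ :=
    Finset.prod_pos fun p hp => lt_trans one_pos (hfact p hp)
  have hloglog : Real.log (Real.log n) ≤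
      Real.log (∏ p ∈ (n + 1).primesBelow, (1 - (p : ℝ)⁻¹)⁻¹) :=
    Real.log_le_log hlogn (le_trans h1 h2)
  rw [Real.log_prod (fun p hp => ne_of_gt (lt_trans one_pos (hfact p hp)))] at hloglog
  refine le_trans hloglog ?_
  rw [← hP]
  refine Finset.sum_le_sum fun p hp => ?_
  have hp' := Nat.prime_of_mem_primesBelow hp
  have h1p : (1 : ℝ) < p := by exact_mod_cast hp'.one_lt
  have hpm1 : (0:ℝ) < (p:ℝ) - 1 := by linarith
  have heq : (1 - (p : ℝ)⁻¹)⁻¹ = 1 + 1/((p:ℝ) - 1) := by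
    field_simp
    ring
  rw [heq]
  have := Real.log_le_sub_one_of_pos (x := 1 + 1/((p:ℝ) - 1)) (by positivity)
  linarith

lemma theta_le (n : ℕ) : theta n ≤ (n : ℝ) * Real.log 4 := by
  have h : theta n = Real.log (primorial n) := by
    rw [theta, primorial]
    push_cast
    rw [Real.log_prod]
    intro p hp
    have hp' := (Finset.mem_filter.mp hp).2
    exact_mod_cast hp'.pos.ne'
  rw [h]
  calc Real.log (primorial n) ≤ Real.log ((4:ℕ) ^ n) := by
        refine Real.log_le_log (by exact_mod_cast (primorial_pos n)) ?_
        exact_mod_cast primorial_le_4_pow n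
    _ = (n : ℝ) * Real.log 4 := by push_cast [Real.log_pow]; ring

theorem S1_lower_bound (n : ℕ) (hn : 2 ≤ n) :
    S1 n > theta n / Real.log n + ((n : ℝ) - 1) * Real.log (Real.log n)
      + (-11.869) * ((n : ℝ) - 1) := by
  have hn1 : (1 : ℝ) ≤ (n : ℝ) - 1 := by
    have : (2:ℝ) ≤ n := by exact_mod_cast hn
    linarith
  have hlog2 : Real.log 2 ≤ Real.log n :=
    Real.log_le_log (by norm_num) (by exact_mod_cast hn)
  have hlogn : 0 < Real.log n := lt_of_lt_of_le (Real.log_pos (by norm_num)) hlog2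
  -- θ(n)/log n < 11.869 (n-1)
  have htheta : theta n / Real.log n < 11.869 * ((n:ℝ) - 1) := by
    have h1 : theta n ≤ (n : ℝ) * Real.log 4 := theta_le n
    have h4 : Real.log 4 = 2 * Real.log 2 := by
      rw [show (4:ℝ) = 2^2 by norm_num, Real.log_pow]; push_cast; ring
    have hθnonneg : 0 ≤ theta n := by
      refine Finset.sum_nonneg fun p hp => Real.log_nonneg ?_
      have hp' := (Finset.mem_filter.mp hp).2
      exact_mod_cast hp'.one_le
    have h2 : theta n / Real.log n ≤ (n : ℝ) * Real.log 4 / Real.log 2 := by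
      have hl2 : (0:ℝ) < Real.log 2 := Real.log_pos (by norm_num)
      calc theta n / Real.log n ≤ theta n / Real.log 2 := by gcongr
        _ ≤ (n : ℝ) * Real.log 4 / Real.log 2 := by gcongr
    have h3 : (n : ℝ) * Real.log 4 / Real.log 2 = 2 * n := by
      rw [h4]
      have hl2 : (0:ℝ) < Real.log 2 := Real.log_pos (by norm_num)
      field_simp
    rw [h3] at h2
    have : (2:ℝ) * n ≤ 4 * ((n:ℝ) - 1) := by
      have : (2:ℝ) ≤ n := by exact_mod_cast hn
      linarith
    nlinarith
  have hsum := loglog_le_sum n hn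
  have hS1 : ((n:ℝ) - 1) * Real.log (Real.log n) ≤ S1 n := by
    rw [S1]
    calc ((n:ℝ) - 1) * Real.log (Real.log n)
        ≤ ((n:ℝ) - 1) * ∑ p ∈ (Finset.range (n + 1)).filter Nat.Prime,
            (1 : ℝ) / ((p : ℝ) - 1) := by
          apply mul_le_mul_of_nonneg_left hsum (by linarith)
      _ = ∑ p ∈ (Finset.range (n + 1)).filter Nat.Prime,
            ((n : ℝ) - 1) / ((p : ℝ) - 1) := by
          rw [Finset.mul_sum]
          exact Finset.sum_congr rfl fun p _ => by ring
  nlinarith
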